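/- Let ℓ be a prime and m ≥ 0, n ≥ 1 integers. In GSp₄(ℚ_ℓ) one has the double coset decomposition B^{(1)}_{m,n} · diag(ℓ², ℓ, ℓ, 1) · B^{(1)}_{m,n} = ⋃ M(x,y,z) · B^{(1)}_{m,n}, where M(x,y,z) is the matrix with rows (ℓ², ℓx, ℓy, z), (0, ℓ, 0, y), (0, 0, ℓ, −x), (0, 0, 0, 1) and the union is over 0 ≤ x, y < ℓ and 0 ≤ z < ℓ²; the ℓ⁴ listed left cosets are pairwise distinct. -/

import Mathlib

open Pointwise

noncomputable section

/-- The standard skew-symmetric matrix `J` defining `GSp₄`. -/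
def Jmat (p : ℕ) [Fact p.Prime] : Matrix (Fin 4) (Fin 4) ℚ_[p] :=
  !![0, 0, 0, 1; 0, 0, 1, 0; 0, -1, 0, 0; -1, 0, 0, 0]

/-- The subgroup `B^{(1)}_{m,n}` of `GSp₄(ℤ_ℓ)`: integral symplectic similitudes with
multiplier `μ ≡ 1 (mod ℓ^m)`, all entries below the diagonal divisible by `ℓⁿ`, and
(4,4)-entry `≡ 1 (mod ℓⁿ)`, viewed inside the 4×4 matrices over `ℚ_ℓ`. -/
def Bmn1 (p : ℕ) [Fact p.Prime] (m n : ℕ) : Set (Matrix (Fin 4) (Fin 4) ℚ_[p]) :=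
  {g | (∀ i j, ‖g i j‖ ≤ 1) ∧ ‖g.det‖ = 1 ∧
    (∃ μ : ℚ_[p], ‖μ‖ = 1 ∧ ‖μ - 1‖ ≤ (p : ℝ) ^ (-(m : ℤ)) ∧
      g.transpose * Jmat p * g = μ • Jmat p) ∧
    ‖g 1 0‖ ≤ (p : ℝ) ^ (-(n : ℤ)) ∧ ‖g 2 0‖ ≤ (p : ℝ) ^ (-(n : ℤ)) ∧
    ‖g 2 1‖ ≤ (p : ℝ) ^ (-(n : ℤ)) ∧ ‖g 3 0‖ ≤ (p : ℝ) ^ (-(n : ℤ)) ∧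
    ‖g 3 1‖ ≤ (p : ℝ) ^ (-(n : ℤ)) ∧ ‖g 3 2‖ ≤ (p : ℝ) ^ (-(n : ℤ)) ∧
    ‖g 3 3 - 1‖ ≤ (p : ℝ) ^ (-(n : ℤ))}

/-- The coset representatives `M(x,y,z)` for `0 ≤ x,y < ℓ`, `0 ≤ z < ℓ²`. -/
def rep9 (p : ℕ) [Fact p.Prime] :
    Fin p × Fin p × Fin (p ^ 2) → Matrix (Fin 4) (Fin 4) ℚ_[p] :=
  fun i => !![(p : ℚ_[p]) ^ 2, (p : ℚ_[p]) * ((i.1 : ℕ) : ℚ_[p]),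
                (p : ℚ_[p]) * ((i.2.1 : ℕ) : ℚ_[p]), ((i.2.2 : ℕ) : ℚ_[p]);
              0, (p : ℚ_[p]), 0, ((i.2.1 : ℕ) : ℚ_[p]);
              0, 0, (p : ℚ_[p]), -((i.1 : ℕ) : ℚ_[p]);
              0, 0, 0, 1]

/-!
Write `M(x,y,z) = u(x,y,z) · D` with `D = diag(ℓ², ℓ, ℓ, 1)` and `u(x,y,z)` in the unipotent
radical of the Klingen parabolic, which lies in `B = B^{(1)}_{m,n}`. Since `n ≥ 1`, the corner
entry of any `b ∈ B` is a unit, so `x, y` mod `ℓ` and `z` mod `ℓ²` can be chosen to make the top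
three entries of the last column of `c = u(x,y,z)⁻¹ b` divisible by `ℓ²`, `ℓ`, `ℓ`. The symplectic
relations between the last column and the two middle columns of `c` then make the middle entries
of its first row divisible by `ℓ`, which is exactly what makes `D⁻¹ c D` integral, hence in `B`;
so `b D = M(x,y,z) · D⁻¹ c D`. Conversely, in `M(x,y,z) = M(x',y',z') g` with `g` integral, the
last column gives `x ≡ x'`, `y ≡ y'` mod `ℓ` and then `z ≡ z'` mod `ℓ²`.
-/

open Matrix

section Similitude

variable {R ι : Type*} [CommRing R] [Fintype ι]

def IsSimilitude (J g : Matrix ι ι R) (μ : R) : Prop := gᵀ * J * g = μ • J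

lemma IsSimilitude.transpose_mul_mul {J A : Matrix ι ι R} {α : R} (hA : IsSimilitude J A α)
    (B : Matrix ι ι R) : (A * B)ᵀ * J * (A * B) = α • (Bᵀ * J * B) := by
  rw [transpose_mul, show Bᵀ * Aᵀ * J * (A * B) = Bᵀ * (Aᵀ * J * A) * B by
    simp only [Matrix.mul_assoc], hA, Matrix.mul_smul, Matrix.smul_mul]

lemma IsSimilitude.mul {J A B : Matrix ι ι R} {α β : R} (hA : IsSimilitude J A α)
    (hB : IsSimilitude J B β) : IsSimilitude J (A * B) (α * β) := by
  rw [IsSimilitude, hA.transpose_mul_mul, hB, smul_smul]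

lemma IsSimilitude.of_mul_eq_mul {K : Type*} [Field K] {J D c h : Matrix ι ι K} {δ μ : K}
    (hD : IsSimilitude J D δ) (hδ : δ ≠ 0) (hc : IsSimilitude J c μ) (hDh : D * h = c * D) :
    IsSimilitude J h μ := by
  have hcD := hc.mul hD
  rw [IsSimilitude, ← hDh, hD.transpose_mul_mul, mul_comm, ← smul_smul] at hcD
  exact smul_right_injective _ hδ hcD

end Similitude

section Ultrametric

variable {S : Type*} [SeminormedAddGroup S] [IsUltrametricDist S]

lemma norm_add_le_of_norm_le {a b : S} {r : ℝ} (ha : ‖a‖ ≤ r) (hb : ‖b‖ ≤ r) : ‖a + b‖ ≤ r :=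
  (IsUltrametricDist.norm_add_le_max a b).trans (max_le ha hb)

lemma norm_sub_le_of_norm_le {a b : S} {r : ℝ} (ha : ‖a‖ ≤ r) (hb : ‖b‖ ≤ r) : ‖a - b‖ ≤ r :=
  sub_eq_add_neg a b ▸ norm_add_le_of_norm_le ha (norm_neg b ▸ hb)

end Ultrametric

section NormMul

variable {R : Type*} [SeminormedRing R] {a b : R} {r : ℝ}

lemma norm_mul_le_of_norm_le_one_left (ha : ‖a‖ ≤ 1) (hb : ‖b‖ ≤ r) : ‖a * b‖ ≤ r :=
  (norm_mul_le a b).trans ((mul_le_of_le_one_left (norm_nonneg b) ha).trans hb)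

lemma norm_mul_le_of_norm_le_one_right (ha : ‖a‖ ≤ r) (hb : ‖b‖ ≤ 1) : ‖a * b‖ ≤ r :=
  (norm_mul_le a b).trans ((mul_le_of_le_one_right (norm_nonneg a) hb).trans ha)

end NormMul

section Klingen

variable {R : Type*} [CommRing R]

def klingen (x y z : R) : Matrix (Fin 4) (Fin 4) R :=
  !![1, x, y, z; 0, 1, 0, y; 0, 0, 1, -x; 0, 0, 0, 1]

lemma klingen_mul_klingen (x y z x' y' z' : R) :
    klingen x y z * klingen x' y' z' = klingen (x + x') (y + y') (z + z' + x * y' - y * x') := by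
  ext i j
  fin_cases i <;> fin_cases j <;> simp [klingen, mul_apply, Fin.sum_univ_four] <;> ring

lemma klingen_mul_klingen_neg (x y z : R) : klingen x y z * klingen (-x) (-y) (-z) = 1 := by
  rw [klingen_mul_klingen]
  ext i j
  fin_cases i <;> fin_cases j <;> simp [klingen, mul_comm]

variable (x y z : R) (b : Matrix (Fin 4) (Fin 4) R) (k : Fin 4)

lemma klingen_mul_apply_zero :
    (klingen x y z * b) 0 k = b 0 k + x * b 1 k + y * b 2 k + z * b 3 k := by
  simp [klingen, mul_apply, Fin.sum_univ_four]

lemma klingen_mul_apply_one : (klingen x y z * b) 1 k = b 1 k + y * b 3 k := by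
  simp [klingen, mul_apply, Fin.sum_univ_four]

lemma klingen_mul_apply_two : (klingen x y z * b) 2 k = b 2 k - x * b 3 k := by
  simp [klingen, mul_apply, Fin.sum_univ_four, sub_eq_add_neg]

lemma klingen_mul_apply_three : (klingen x y z * b) 3 k = b 3 k := by
  simp [klingen, mul_apply, Fin.sum_univ_four]

end Klingen

def weight : Fin 4 → ℕ := ![2, 1, 1, 0]

lemma weight_le_of_lt {i j : Fin 4} (h : j < i) : weight i ≤ weight j := by
  fin_cases i <;> fin_cases j <;> simp [weight] at h ⊢

namespace GSp4

variable {p : ℕ} [Fact p.Prime] {m n : ℕ}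

lemma one_lt_natCast_prime : (1 : ℝ) < p := by exact_mod_cast (Fact.out : p.Prime).one_lt

lemma natCast_prime_ne_zero : (p : ℚ_[p]) ≠ 0 := Nat.cast_ne_zero.2 (Fact.out : p.Prime).ne_zero

lemma norm_natCast_prime_pow_mul_le (j : ℕ) {a : ℚ_[p]} (ha : ‖a‖ ≤ 1) :
    ‖(p : ℚ_[p]) ^ j * a‖ ≤ (p : ℝ) ^ (-(j : ℤ)) := by
  rw [norm_mul, Padic.norm_p_pow]
  exact mul_le_of_le_one_right (zpow_nonneg (Nat.cast_nonneg p) _) ha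

lemma norm_natCast_prime_zpow_mul (k : ℤ) (a : ℚ_[p]) :
    ‖(p : ℚ_[p]) ^ k * a‖ = (p : ℝ) ^ (-k) * ‖a‖ := by
  rw [norm_mul, Padic.norm_p_zpow]

lemma exists_natCast_norm_sub_mul_le {a u : ℚ_[p]} (ha : ‖a‖ ≤ 1) (hu : ‖u‖ = 1) (j : ℕ) :
    ∃ k < p ^ j, ‖a - k * u‖ ≤ (p : ℝ) ^ (-(j : ℤ)) := by
  have hu0 : u ≠ 0 := norm_ne_zero_iff.1 (hu ▸ one_ne_zero)
  let t : ℤ_[p] := ⟨a * u⁻¹, by rwa [norm_mul, norm_inv, hu, inv_one, mul_one]⟩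
  refine ⟨t.appr j, t.appr_lt j, ?_⟩
  have ht : ‖t - t.appr j‖ ≤ (p : ℝ) ^ (-(j : ℤ)) :=
    (PadicInt.norm_le_pow_iff_mem_span_pow _ _).2 (t.appr_spec j)
  rw [show a - (t.appr j : ℚ_[p]) * u = ((t - t.appr j : ℤ_[p]) : ℚ_[p]) * u by
    rw [PadicInt.coe_sub, PadicInt.coe_natCast, sub_mul, show (t : ℚ_[p]) = a * u⁻¹ from rfl,
      inv_mul_cancel_right₀ hu0], norm_mul, hu, mul_one]
  exact ht

lemma eq_of_norm_natCast_sub_le {k k' j : ℕ} (hk : k < p ^ j) (hk' : k' < p ^ j)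
    (h : ‖(k : ℚ_[p]) - k'‖ ≤ (p : ℝ) ^ (-(j : ℤ))) : k = k' := by
  have hdvd := (Padic.norm_int_le_pow_iff_dvd ((k : ℤ) - k') j).1 (by exact_mod_cast h)
  exact (Nat.ModEq.eq_of_lt_of_lt (Nat.modEq_iff_dvd.2 (by exact_mod_cast hdvd)) hk' hk).symm

lemma Jmat_form_apply (g : Matrix (Fin 4) (Fin 4) ℚ_[p]) (j k : Fin 4) :
    (gᵀ * Jmat p * g) j k = g 0 j * g 3 k + g 1 j * g 2 k - g 2 j * g 1 k - g 3 j * g 0 k := by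
  simp only [Jmat, mul_apply, transpose_apply, of_apply, cons_val', cons_val_fin_one,
    Fin.sum_univ_four, cons_val_zero, cons_val_one, cons_val, mul_zero, add_zero, mul_neg, mul_one,
    zero_add, neg_mul]
  ring

lemma isSimilitude_klingen (x y z : ℚ_[p]) : IsSimilitude (Jmat p) (klingen x y z) 1 := by
  ext i j
  rw [Jmat_form_apply]
  fin_cases i <;> fin_cases j <;> simp [klingen, Jmat, mul_comm]

lemma isSimilitude_diagonal :
    IsSimilitude (Jmat p) (diagonal ![(p : ℚ_[p]) ^ 2, (p : ℚ_[p]), (p : ℚ_[p]), 1]) (p ^ 2) := by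
  ext i j
  rw [Jmat_form_apply]
  fin_cases i <;> fin_cases j <;> simp [Jmat] <;> ring

lemma rep9_eq_klingen_mul (i : Fin p × Fin p × Fin (p ^ 2)) :
    rep9 p i = klingen ((i.1 : ℕ) : ℚ_[p]) ((i.2.1 : ℕ) : ℚ_[p]) ((i.2.2 : ℕ) : ℚ_[p]) *
      diagonal ![(p : ℚ_[p]) ^ 2, (p : ℚ_[p]), (p : ℚ_[p]), 1] := by
  ext a b
  fin_cases a <;> fin_cases b <;> simp [rep9, klingen, mul_comm]

lemma diagonal_eq_pow_weight :
    ![(p : ℚ_[p]) ^ 2, (p : ℚ_[p]), (p : ℚ_[p]), 1] = fun i => (p : ℚ_[p]) ^ weight i := by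
  ext i
  fin_cases i <;> simp [weight]

def diagonalConj (p : ℕ) [Fact p.Prime] (c : Matrix (Fin 4) (Fin 4) ℚ_[p]) :
    Matrix (Fin 4) (Fin 4) ℚ_[p] :=
  of fun i j => (p : ℚ_[p]) ^ ((weight j : ℤ) - weight i) * c i j

lemma diagonal_mul_diagonalConj (c : Matrix (Fin 4) (Fin 4) ℚ_[p]) :
    diagonal ![(p : ℚ_[p]) ^ 2, (p : ℚ_[p]), (p : ℚ_[p]), 1] * diagonalConj p c =
      c * diagonal ![(p : ℚ_[p]) ^ 2, (p : ℚ_[p]), (p : ℚ_[p]), 1] := by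
  ext i j
  simp only [diagonal_mul, mul_diagonal, diagonal_eq_pow_weight, diagonalConj, of_apply]
  rw [← mul_assoc, ← zpow_natCast, ← zpow_natCast, ← zpow_add₀ natCast_prime_ne_zero,
    add_sub_cancel, mul_comm]

lemma mem_Bmn1_iff {g : Matrix (Fin 4) (Fin 4) ℚ_[p]} :
    g ∈ Bmn1 p m n ↔ (∀ i j, ‖g i j‖ ≤ 1) ∧ ‖g.det‖ = 1 ∧
      (∃ μ : ℚ_[p], ‖μ‖ = 1 ∧ ‖μ - 1‖ ≤ (p : ℝ) ^ (-(m : ℤ)) ∧ IsSimilitude (Jmat p) g μ) ∧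
      (∀ i j, j < i → ‖g i j‖ ≤ (p : ℝ) ^ (-(n : ℤ))) ∧ ‖g 3 3 - 1‖ ≤ (p : ℝ) ^ (-(n : ℤ)) := by
  simp only [Bmn1, IsSimilitude, Set.mem_ofPred_eq, Fin.forall_fin_succ]
  simp [Fin.lt_def, and_assoc]

namespace Bmn1

lemma mul_mem {A B : Matrix (Fin 4) (Fin 4) ℚ_[p]} (hA : A ∈ Bmn1 p m n)
    (hB : B ∈ Bmn1 p m n) : A * B ∈ Bmn1 p m n := by
  obtain ⟨hAint, hAdet, ⟨α, hα, hαm, hAsim⟩, hAlow, hA33⟩ := mem_Bmn1_iff.1 hA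
  obtain ⟨hBint, hBdet, ⟨β, hβ, hβm, hBsim⟩, hBlow, hB33⟩ := mem_Bmn1_iff.1 hB
  refine mem_Bmn1_iff.2 ⟨fun i j => ?_, by rw [det_mul, norm_mul, hAdet, hBdet, one_mul],
    ⟨α * β, by rw [norm_mul, hα, hβ, one_mul], ?_, hAsim.mul hBsim⟩, fun i j hji => ?_, ?_⟩
  · rw [mul_apply]
    exact IsUltrametricDist.norm_sum_le_of_forall_le_of_nonneg zero_le_one
      fun k _ => norm_mul_le_of_norm_le_one_left (hAint i k) (hBint k j)
  · rw [show α * β - 1 = α * (β - 1) + (α - 1) by ring]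
    exact norm_add_le_of_norm_le (norm_mul_le_of_norm_le_one_left hα.le hβm) hαm
  · rw [mul_apply]
    refine IsUltrametricDist.norm_sum_le_of_forall_le_of_nonneg (zpow_nonneg (Nat.cast_nonneg p) _)
      fun k _ => ?_
    rcases lt_or_ge k i with hki | hik
    · exact norm_mul_le_of_norm_le_one_right (hAlow i k hki) (hBint k j)
    · exact norm_mul_le_of_norm_le_one_left (hAint i k) (hBlow k j (hji.trans_le hik))
  · rw [mul_apply, Fin.sum_univ_four, show A 3 0 * B 0 3 + A 3 1 * B 1 3 + A 3 2 * B 2 3 +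
      A 3 3 * B 3 3 - 1 = A 3 0 * B 0 3 + A 3 1 * B 1 3 + A 3 2 * B 2 3 +
      (A 3 3 * (B 3 3 - 1) + (A 3 3 - 1)) by ring]
    have hlow k (hk : k < 3) := norm_mul_le_of_norm_le_one_right (hAlow 3 k hk) (hBint k 3)
    exact norm_add_le_of_norm_le (norm_add_le_of_norm_le (norm_add_le_of_norm_le
      (hlow 0 (by decide)) (hlow 1 (by decide))) (hlow 2 (by decide)))
      (norm_add_le_of_norm_le (norm_mul_le_of_norm_le_one_left (hAint 3 3) hB33) hA33)

lemma one_mem : (1 : Matrix (Fin 4) (Fin 4) ℚ_[p]) ∈ Bmn1 p m n := by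
  refine mem_Bmn1_iff.2 ⟨fun i j => ?_, by simp, ⟨1, by simp, by simp, by simp [IsSimilitude]⟩,
    fun i j hji => by simp [one_apply_ne' hji.ne], by simp⟩
  rw [one_apply]
  split_ifs <;> simp

lemma klingen_mem {x y z : ℚ_[p]} (hx : ‖x‖ ≤ 1) (hy : ‖y‖ ≤ 1) (hz : ‖z‖ ≤ 1) :
    klingen x y z ∈ Bmn1 p m n := by
  refine mem_Bmn1_iff.2 ⟨fun i j => ?_, ?_, ⟨1, by simp, by simp, isSimilitude_klingen x y z⟩,
    fun i j hji => ?_, by simp [klingen]⟩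
  · fin_cases i <;> fin_cases j <;> simp [klingen, hx, hy, hz]
  · simp [klingen, det_succ_row_zero, Fin.sum_univ_succ]
  · fin_cases i <;> fin_cases j <;> simp [klingen] at hji ⊢

lemma natCast_klingen_mem (x y z : ℕ) :
    klingen (x : ℚ_[p]) (y : ℚ_[p]) (z : ℚ_[p]) ∈ Bmn1 p m n :=
  klingen_mem (IsUltrametricDist.norm_natCast_le_one _ x)
    (IsUltrametricDist.norm_natCast_le_one _ y) (IsUltrametricDist.norm_natCast_le_one _ z)

lemma diagonalConj_mem {c : Matrix (Fin 4) (Fin 4) ℚ_[p]} (hc : c ∈ Bmn1 p m n)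
    (hw : ∀ i j, ‖c i j‖ ≤ (p : ℝ) ^ ((weight j : ℤ) - weight i)) :
    diagonalConj p c ∈ Bmn1 p m n := by
  obtain ⟨-, hdet, ⟨μ, hμ, hμm, hsim⟩, hlow, h33⟩ := mem_Bmn1_iff.1 hc
  have hp : (0 : ℝ) < p := zero_lt_one.trans one_lt_natCast_prime
  have hD := diagonal_mul_diagonalConj c
  refine mem_Bmn1_iff.2 ⟨fun i j => ?_, ?_, ⟨μ, hμ, hμm, ?_⟩, fun i j hji => ?_, ?_⟩
  · rw [diagonalConj, of_apply, norm_natCast_prime_zpow_mul]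
    calc (p : ℝ) ^ (-((weight j : ℤ) - weight i)) * ‖c i j‖
        ≤ (p : ℝ) ^ (-((weight j : ℤ) - weight i)) * (p : ℝ) ^ ((weight j : ℤ) - weight i) :=
          mul_le_mul_of_nonneg_left (hw i j) (zpow_nonneg hp.le _)
      _ = 1 := by rw [← zpow_add₀ hp.ne', neg_add_cancel, zpow_zero]
  · have hdetD : (diagonal ![(p : ℚ_[p]) ^ 2, (p : ℚ_[p]), (p : ℚ_[p]), 1]).det ≠ 0 := by
      simp [det_diagonal, Fin.prod_univ_four, (Fact.out : p.Prime).ne_zero]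
    have hdetc := congrArg det hD
    rw [det_mul, det_mul, mul_comm c.det] at hdetc
    rw [mul_left_cancel₀ hdetD hdetc, hdet]
  · exact isSimilitude_diagonal.of_mul_eq_mul (pow_ne_zero 2 natCast_prime_ne_zero) hsim hD
  · rw [diagonalConj, of_apply, norm_natCast_prime_zpow_mul]
    have hle : ((weight i : ℤ) - weight j) ≤ 0 := by have := weight_le_of_lt hji; omega
    exact (mul_le_of_le_one_left (norm_nonneg _)
      (zpow_le_one_of_nonpos₀ one_lt_natCast_prime.le (by omega))).trans (hlow i j hji)
  · simpa [diagonalConj] using h33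

end Bmn1

lemma norm_three_three_eq_one (hn : 1 ≤ n) {g : Matrix (Fin 4) (Fin 4) ℚ_[p]}
    (hg : g ∈ Bmn1 p m n) : ‖g 3 3‖ = 1 := by
  obtain ⟨-, -, -, -, h33⟩ := mem_Bmn1_iff.1 hg
  have hlt : ‖g 3 3 - 1‖ < ‖(1 : ℚ_[p])‖ := by
    rw [norm_one]
    exact h33.trans_lt (zpow_lt_one_of_neg₀ one_lt_natCast_prime (by omega))
  simpa using Padic.norm_eq_of_norm_sub_lt_right hlt

lemma norm_le_zpow_weight (hn : 1 ≤ n) {c : Matrix (Fin 4) (Fin 4) ℚ_[p]}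
    (hc : c ∈ Bmn1 p m n) (h03 : ‖c 0 3‖ ≤ (p : ℝ) ^ (-2 : ℤ))
    (h13 : ‖c 1 3‖ ≤ (p : ℝ) ^ (-1 : ℤ)) (h23 : ‖c 2 3‖ ≤ (p : ℝ) ^ (-1 : ℤ)) (i j : Fin 4) :
    ‖c i j‖ ≤ (p : ℝ) ^ ((weight j : ℤ) - weight i) := by
  obtain ⟨hint, -, ⟨μ, -, -, hsim⟩, -, -⟩ := mem_Bmn1_iff.1 hc
  by_cases hij : weight i ≤ weight j
  · exact (hint i j).trans (one_le_zpow₀ one_lt_natCast_prime.le (by omega))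
  have h03' : ‖c 0 3‖ ≤ (p : ℝ) ^ (-1 : ℤ) :=
    h03.trans (zpow_le_zpow_right₀ one_lt_natCast_prime.le (by norm_num))
  -- Columns `k` and `3` are orthogonal for the symplectic form, and `c 3 3` is a unit.
  have hfirst_row (k : Fin 4) (hk : Jmat p k 3 = 0) : ‖c 0 k‖ ≤ (p : ℝ) ^ (-1 : ℤ) := by
    have hrel := congrFun (congrFun hsim k) 3
    rw [Jmat_form_apply, Matrix.smul_apply, hk, smul_zero] at hrel
    have hb : ‖c 0 k * c 3 3‖ ≤ (p : ℝ) ^ (-1 : ℤ) := by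
      rw [show c 0 k * c 3 3 = c 2 k * c 1 3 - c 1 k * c 2 3 + c 3 k * c 0 3 by
        linear_combination hrel]
      exact norm_add_le_of_norm_le (norm_sub_le_of_norm_le
        (norm_mul_le_of_norm_le_one_left (hint 2 k) h13)
        (norm_mul_le_of_norm_le_one_left (hint 1 k) h23))
        (norm_mul_le_of_norm_le_one_left (hint 3 k) h03')
    rwa [norm_mul, norm_three_three_eq_one hn hc, mul_one] at hb
  fin_cases i <;> fin_cases j <;> try exact absurd (by decide) hij
  exacts [hfirst_row 1 (by simp [Jmat]), hfirst_row 2 (by simp [Jmat]), h03, h13, h23]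

lemma exists_klingen_mul_norm_le (hn : 1 ≤ n) {b : Matrix (Fin 4) (Fin 4) ℚ_[p]}
    (hb : b ∈ Bmn1 p m n) : ∃ (x y : Fin p) (z : Fin (p ^ 2)),
      ‖(klingen (-(x : ℕ) : ℚ_[p]) (-(y : ℕ)) (-(z : ℕ)) * b) 0 3‖ ≤ (p : ℝ) ^ (-2 : ℤ) ∧
      ‖(klingen (-(x : ℕ) : ℚ_[p]) (-(y : ℕ)) (-(z : ℕ)) * b) 1 3‖ ≤ (p : ℝ) ^ (-1 : ℤ) ∧
      ‖(klingen (-(x : ℕ) : ℚ_[p]) (-(y : ℕ)) (-(z : ℕ)) * b) 2 3‖ ≤ (p : ℝ) ^ (-1 : ℤ) := by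
  obtain ⟨hint, -⟩ := mem_Bmn1_iff.1 hb
  have h33 := norm_three_three_eq_one hn hb
  have hnat := IsUltrametricDist.norm_natCast_le_one ℚ_[p]
  obtain ⟨x, hx, hbx⟩ := exists_natCast_norm_sub_mul_le (a := -b 2 3)
    (by rw [norm_neg]; exact hint 2 3) h33 1
  obtain ⟨y, hy, hby⟩ := exists_natCast_norm_sub_mul_le (hint 1 3) h33 1
  obtain ⟨z, hz, hbz⟩ := exists_natCast_norm_sub_mul_le
    (a := b 0 3 - (x : ℚ_[p]) * b 1 3 - (y : ℚ_[p]) * b 2 3)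
    (norm_sub_le_of_norm_le (norm_sub_le_of_norm_le (hint 0 3)
      (norm_mul_le_of_norm_le_one_left (hnat x) (hint 1 3)))
      (norm_mul_le_of_norm_le_one_left (hnat y) (hint 2 3))) h33 2
  rw [pow_one] at hx hy
  simp only [Nat.cast_one, Nat.cast_ofNat] at hbx hby hbz
  refine ⟨⟨x, hx⟩, ⟨y, hy⟩, ⟨z, hz⟩, ?_, ?_, ?_⟩
  · rw [klingen_mul_apply_zero]
    convert hbz using 2
    ring
  · rw [klingen_mul_apply_one]
    convert hby using 2
    ring
  · rw [klingen_mul_apply_two, show b 2 3 - -(x : ℚ_[p]) * b 3 3 = -(-b 2 3 - x * b 3 3) by ring,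
      norm_neg]
    exact hbx

lemma exists_rep9_mul_eq (hn : 1 ≤ n) {b : Matrix (Fin 4) (Fin 4) ℚ_[p]} (hb : b ∈ Bmn1 p m n) :
    ∃ i, ∃ h ∈ Bmn1 p m n,
      rep9 p i * h = b * diagonal ![(p : ℚ_[p]) ^ 2, (p : ℚ_[p]), (p : ℚ_[p]), 1] := by
  obtain ⟨x, y, z, h03, h13, h23⟩ := exists_klingen_mul_norm_le hn hb
  have hnat (k : ℕ) : ‖-(k : ℚ_[p])‖ ≤ 1 := by
    rw [norm_neg]
    exact IsUltrametricDist.norm_natCast_le_one _ k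
  have hc := Bmn1.mul_mem (m := m) (n := n) (Bmn1.klingen_mem (hnat x) (hnat y) (hnat z)) hb
  refine ⟨(x, y, z), _, Bmn1.diagonalConj_mem hc (norm_le_zpow_weight hn hc h03 h13 h23), ?_⟩
  rw [rep9_eq_klingen_mul, Matrix.mul_assoc, diagonal_mul_diagonalConj, ← Matrix.mul_assoc,
    ← Matrix.mul_assoc, klingen_mul_klingen_neg, Matrix.one_mul]

lemma eq_of_rep9_mem_rep9_mul {i i' : Fin p × Fin p × Fin (p ^ 2)}
    (h : rep9 p i ∈ ({rep9 p i'} : Set (Matrix (Fin 4) (Fin 4) ℚ_[p])) * Bmn1 p m n) :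
    i = i' := by
  obtain ⟨_, rfl, g, hg, he : rep9 p i' * g = rep9 p i⟩ := h
  obtain ⟨hint, -⟩ := mem_Bmn1_iff.1 hg
  rw [rep9_eq_klingen_mul, Matrix.mul_assoc] at he
  have e3 := congrFun (congrFun he 3) 3
  have e2 := congrFun (congrFun he 2) 3
  have e1 := congrFun (congrFun he 1) 3
  have e0 := congrFun (congrFun he 0) 3
  simp only [klingen_mul_apply_zero, klingen_mul_apply_one, klingen_mul_apply_two,
    klingen_mul_apply_three, diagonal_mul, rep9, of_apply, cons_val', cons_val_fin_one, cons_val,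
    cons_val_zero, cons_val_one, one_mul] at e3 e2 e1 e0
  rw [e3, mul_one] at e2 e1 e0
  have hx : (i.1 : ℕ) = i'.1 :=
    eq_of_norm_natCast_sub_le (p := p) (j := 1) (by simp) (by simp) <| by
      rw [show ((i.1 : ℕ) : ℚ_[p]) - i'.1 = p ^ 1 * -g 2 3 by linear_combination e2]
      exact norm_natCast_prime_pow_mul_le 1 (by rw [norm_neg]; exact hint 2 3)
  have hy : (i.2.1 : ℕ) = i'.2.1 :=
    eq_of_norm_natCast_sub_le (p := p) (j := 1) (by simp) (by simp) <| by
      rw [show ((i.2.1 : ℕ) : ℚ_[p]) - i'.2.1 = p ^ 1 * g 1 3 by linear_combination -e1]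
      exact norm_natCast_prime_pow_mul_le 1 (hint 1 3)
  have hz : (i.2.2 : ℕ) = i'.2.2 := eq_of_norm_natCast_sub_le i.2.2.2 i'.2.2.2 <| by
    rw [show ((i.2.2 : ℕ) : ℚ_[p]) - i'.2.2 = p ^ 2 * g 0 3 by
      linear_combination -e0 + (i'.1 : ℚ_[p]) * e1 + (i'.2.1 : ℚ_[p]) * e2
        + (i'.1 : ℚ_[p]) * congrArg (Nat.cast (R := ℚ_[p])) hy
        - (i'.2.1 : ℚ_[p]) * congrArg (Nat.cast (R := ℚ_[p])) hx]
    exact norm_natCast_prime_pow_mul_le 2 (hint 0 3)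
  exact Prod.ext (Fin.ext hx) (Prod.ext (Fin.ext hy) (Fin.ext hz))

end GSp4

open GSp4

/-- Double coset decomposition of `B^{(1)}_{m,n} · diag(ℓ²,ℓ,ℓ,1) · B^{(1)}_{m,n}` into
`ℓ⁴` pairwise distinct left cosets. -/
theorem stmt9 (p : ℕ) [Fact p.Prime] (m n : ℕ) (hn : 1 ≤ n) :
    (Bmn1 p m n *
        {Matrix.diagonal ![(p : ℚ_[p]) ^ 2, (p : ℚ_[p]), (p : ℚ_[p]), 1]} * Bmn1 p m n =
      ⋃ i : Fin p × Fin p × Fin (p ^ 2),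
        ({rep9 p i} : Set (Matrix (Fin 4) (Fin 4) ℚ_[p])) * Bmn1 p m n) ∧
    Function.Injective
      (fun i : Fin p × Fin p × Fin (p ^ 2) =>
        ({rep9 p i} : Set (Matrix (Fin 4) (Fin 4) ℚ_[p])) * Bmn1 p m n) := by
  refine ⟨Set.Subset.antisymm ?_ ?_, fun i i' he => eq_of_rep9_mem_rep9_mul (m := m) (n := n) ?_⟩
  · rintro _ ⟨_, ⟨b₁, hb₁, _, rfl, rfl⟩, b₂, hb₂, rfl⟩
    obtain ⟨i, h, hh, he⟩ := exists_rep9_mul_eq hn hb₁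
    exact Set.mem_iUnion.2 ⟨i, _, rfl, h * b₂, Bmn1.mul_mem hh hb₂, by
      simp only [← Matrix.mul_assoc, he]⟩
  · rintro _ ⟨_, ⟨i, rfl⟩, ⟨_, rfl, b, hb, rfl⟩⟩
    rw [rep9_eq_klingen_mul]
    exact ⟨_, ⟨_, Bmn1.natCast_klingen_mem _ _ _, _, rfl, rfl⟩, b, hb, rfl⟩
  · have hi : rep9 p i ∈ ({rep9 p i} : Set (Matrix (Fin 4) (Fin 4) ℚ_[p])) * Bmn1 p m n :=
      ⟨_, rfl, 1, Bmn1.one_mem, Matrix.mul_one _⟩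
    rwa [show ({rep9 p i} : Set (Matrix (Fin 4) (Fin 4) ℚ_[p])) * Bmn1 p m n = _ from he] at hi
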